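/- Let H be a complex Hilbert space and let M and N be closed subspaces of H. Then the algebraic sum M + N is closed in H if and only if c_e(M,N) < 1, i.e. if and only if the distance of P_M P_N − P_{M∩N} to the set of compact operators on H is strictly less than 1. -/

import Mathlib

/-- The orthogonal projection onto a subspace `K` of a complex inner product space,
as a bounded operator on the whole space (junk value `0` if `K` does not admit an
orthogonal projection; for a closed subspace of a Hilbert space it is the genuine
orthogonal projection). -/
noncomputable def proj {H : Type*} [NormedAddCommGroup H] [InnerProductSpace ℂ H]
    (K : Submodule ℂ H) : H →L[ℂ] H :=
  letI := Classical.propDecidable (Submodule.HasOrthogonalProjection K)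
  if h : Submodule.HasOrthogonalProjection K then
    haveI := h
    K.subtypeL.comp (Submodule.orthogonalProjectionOnto K)
  else 0

/-- The cosine of the essential Friedrichs angle between two (closed) subspaces `M`, `N`:
the infimum over compact operators `K` of `‖P_M P_N - P_{M ∩ N} + K‖`, i.e. the norm of
the class of `P_M P_N - P_{M ∩ N}` in the Calkin algebra. -/
noncomputable def essFriedrichs {H : Type*} [NormedAddCommGroup H] [InnerProductSpace ℂ H]
    (M N : Submodule ℂ H) : ℝ :=
  ⨅ K : {T : H →L[ℂ] H // IsCompactOperator ⇑T},
    ‖proj M * proj N - proj (M ⊓ N) + (K : H →L[ℂ] H)‖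

/-!
Put `N' = (M ⊓ N)ᗮ ⊓ N`. Then `M ⊓ N' = 0`, `M + N' = M + N` and
`P_M P_N - P_{M ∩ N} = P_M P_{N'}`. Since `M ⊓ N' = 0`, the open mapping theorem makes `M + N'`
closed iff `‖b‖ ≤ C ‖a + b‖` for `a ∈ M`, `b ∈ N'`, and as `‖b - P_M b‖` is the distance from `b`
to `M`, this holds iff `‖P_M P_{N'}‖ < 1`.

It remains to see that `T = P_M P_{N'}` has norm `< 1` as soon as some compact perturbation
`T + K` does. As `M ⊓ N' = 0`, `‖T x‖ < ‖x‖` for `x ≠ 0`, so `T⋆T - 1` is self-adjoint and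
injective, hence has dense range. If `‖T‖ = 1`, a sequence `x_n` in the unit ball with
`‖T x_n‖ → 1` satisfies `(T⋆T - 1) x_n → 0`, so it is weakly null; then `K x_n → 0`, which
forces `‖T + K‖ ≥ 1`.
-/

open Filter Topology
open scoped InnerProductSpace

theorem Submodule.isClosed_sup_iff_exists_mul_norm_le {𝕜 E : Type*} [NontriviallyNormedField 𝕜]
    [NormedAddCommGroup E] [NormedSpace 𝕜 E] [CompleteSpace E] {M N : Submodule 𝕜 E}
    (hM : IsClosed (M : Set E)) (hN : IsClosed (N : Set E)) (hMN : M ⊓ N = ⊥) :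
    IsClosed ((M ⊔ N : Submodule 𝕜 E) : Set E) ↔
      ∃ c > 0, ∀ a ∈ M, ∀ b ∈ N, c * ‖b‖ ≤ ‖a + b‖ := by
  have := hM.completeSpace_coe
  have := hN.completeSpace_coe
  set L : M × N →L[𝕜] E := M.subtypeL.coprod N.subtypeL
  have hrange : Set.range L = (M ⊔ N : Submodule 𝕜 E) := by
    change Set.range (L : M × N →ₗ[𝕜] E) = _
    rw [← LinearMap.coe_range]
    simp [L, LinearMap.range_coprod]
  have hinj : Function.Injective L := by
    change Function.Injective (L : M × N →ₗ[𝕜] E)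
    rw [← LinearMap.ker_eq_bot, Submodule.eq_bot_iff]
    rintro ⟨⟨a, ha⟩, ⟨b, hb⟩⟩ (hab : a + b = 0)
    have hbM : b ∈ M := by simpa [eq_neg_of_add_eq_zero_right hab] using M.neg_mem ha
    have hb0 : b = 0 := by simpa [hMN] using Submodule.mem_inf.2 ⟨hbM, hb⟩
    have ha0 : a = 0 := by simpa [hb0] using hab
    subst ha0 hb0
    rfl
  rw [← hrange, L.isClosed_range_iff_antilipschitz_of_injective hinj,
    antilipschitzWith_iff_exists_mul_le_norm]
  constructor
  · rintro ⟨c, hc, hcL⟩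
    refine ⟨c, hc, fun a ha b hb ↦ ?_⟩
    calc c * ‖b‖ ≤ c * ‖((⟨a, ha⟩, ⟨b, hb⟩) : M × N)‖ := by
          gcongr; exact norm_snd_le (⟨⟨a, ha⟩, ⟨b, hb⟩⟩ : M × N)
      _ ≤ ‖a + b‖ := hcL _
  · rintro ⟨c, hc, hcMN⟩
    refine ⟨c / (c + 1), by positivity, fun ⟨⟨a, ha⟩, ⟨b, hb⟩⟩ ↦ ?_⟩
    have hb' := hcMN a ha b hb
    have ha' : ‖a‖ ≤ ‖a + b‖ + ‖b‖ := by simpa using norm_sub_le (a + b) b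
    change _ ≤ ‖a + b‖
    rw [Prod.norm_def, mul_max_of_nonneg _ _ (by positivity), max_le_iff, div_mul_eq_mul_div,
      div_mul_eq_mul_div, div_le_iff₀ (by positivity), div_le_iff₀ (by positivity)]
    simp only [Submodule.coe_norm]
    constructor <;> nlinarith [norm_nonneg b, norm_nonneg (a + b)]

namespace Submodule

variable {𝕜 E : Type*} [RCLike 𝕜] [NormedAddCommGroup E] [InnerProductSpace 𝕜 E]

section Projection

variable {K N : Submodule 𝕜 E} [K.HasOrthogonalProjection] [N.HasOrthogonalProjection]

theorem norm_sub_starProjection_le (y : E) {m : E} (hm : m ∈ K) :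
    ‖y - K.starProjection y‖ ≤ ‖y - m‖ :=
  (starProjection_minimal y).trans_le
    (ciInf_le ⟨0, by rintro _ ⟨_, rfl⟩; positivity⟩ (⟨m, hm⟩ : K))

theorem norm_sq_eq_norm_sq_starProjection_add (y : E) :
    ‖y‖ ^ 2 = ‖K.starProjection y‖ ^ 2 + ‖y - K.starProjection y‖ ^ 2 := by
  rw [← starProjection_orthogonal_val]
  exact norm_sq_eq_add_norm_sq_starProjection y K

theorem starProjection_mul_starProjection_eq_right_of_le (h : K ≤ N) :
    N.starProjection * K.starProjection = K.starProjection := by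
  ext v
  exact starProjection_eq_self_iff.2 (h (K.starProjection_apply_mem v))

theorem starProjection_sub_starProjection_of_le [(Kᗮ ⊓ N).HasOrthogonalProjection] (h : K ≤ N) :
    N.starProjection - K.starProjection = (Kᗮ ⊓ N).starProjection := by
  ext v
  rw [sub_apply]
  refine (eq_starProjection_of_mem_of_inner_eq_zero (mem_inf.2 ⟨?_, ?_⟩) fun w hw ↦ ?_).symm
  · rw [← starProjection_apply_eq_zero_iff, map_sub, ← ContinuousLinearMap.comp_apply,
      starProjection_comp_starProjection_of_le h,
      starProjection_eq_self_iff.2 (K.starProjection_apply_mem v), sub_self]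
  · exact N.sub_mem (N.starProjection_apply_mem v) (h (K.starProjection_apply_mem v))
  · have hvN : ⟪v - N.starProjection v, w⟫_𝕜 = 0 :=
      N.inner_left_of_mem_orthogonal hw.2 (sub_starProjection_mem_orthogonal v)
    have hvK : ⟪K.starProjection v, w⟫_𝕜 = 0 :=
      K.inner_right_of_mem_orthogonal (K.starProjection_apply_mem v) hw.1
    rw [show v - (N.starProjection v - K.starProjection v)
      = (v - N.starProjection v) + K.starProjection v by abel, inner_add_left, hvN, hvK, add_zero]

end Projection

variable (M N : Submodule 𝕜 E)

section Angle

variable [M.HasOrthogonalProjection] [N.HasOrthogonalProjection]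

theorem norm_starProjection_mul_starProjection_lt_one_iff :
    ‖M.starProjection * N.starProjection‖ < 1 ↔
      ∃ c > 0, ∀ a ∈ M, ∀ b ∈ N, c * ‖b‖ ≤ ‖a + b‖ := by
  set T := M.starProjection * N.starProjection
  have hTb : ∀ b ∈ N, T b = M.starProjection b := fun b hb ↦ by
    simp [T, starProjection_eq_self_iff.2 hb]
  constructor
  · refine fun hT ↦ ⟨1 - ‖T‖, by linarith, fun a ha b hb ↦ ?_⟩
    have hPb : ‖M.starProjection b‖ ≤ ‖T‖ * ‖b‖ := hTb b hb ▸ T.le_opNorm b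
    have hdist : ‖b - M.starProjection b‖ ≤ ‖a + b‖ := by
      simpa [add_comm] using norm_sub_starProjection_le b (M.neg_mem ha)
    nlinarith [norm_le_norm_add_norm_sub' b (M.starProjection b)]
  · rintro ⟨c, hc, hcMN⟩
    set d := min c 1
    have hd : 0 < d := lt_min hc one_pos
    have hd1 : d ≤ 1 := min_le_right c 1
    have hPb : ∀ b ∈ N, ‖M.starProjection b‖ ^ 2 ≤ (1 - d ^ 2) * ‖b‖ ^ 2 := fun b hb ↦ by
      have h := hcMN _ (M.neg_mem (M.starProjection_apply_mem b)) b hb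
      rw [neg_add_eq_sub] at h
      have hdb : d * ‖b‖ ≤ ‖b - M.starProjection b‖ :=
        (mul_le_mul_of_nonneg_right (min_le_left c 1) (norm_nonneg b)).trans h
      nlinarith [pow_le_pow_left₀ (by positivity) hdb 2, norm_sq_eq_norm_sq_starProjection_add
        (K := M) b]
    -- `1 - d ^ 2 / 2` rather than `√(1 - d ^ 2)`: its square already dominates `1 - d ^ 2`.
    have hd2 : 0 ≤ 1 - d ^ 2 / 2 := by nlinarith
    have hbound : ‖T‖ ≤ 1 - d ^ 2 / 2 := by
      refine T.opNorm_le_bound hd2 fun v ↦ ?_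
      have hv : ‖T v‖ ^ 2 ≤ (1 - d ^ 2) * ‖N.starProjection v‖ ^ 2 :=
        hPb _ (N.starProjection_apply_mem v)
      have hNv := pow_le_pow_left₀ (norm_nonneg _) (N.norm_starProjection_apply_le v) 2
      refine (pow_le_pow_iff_left₀ (norm_nonneg _) (mul_nonneg hd2 (norm_nonneg v))
        two_ne_zero).1 ?_
      calc ‖T v‖ ^ 2 ≤ (1 - d ^ 2) * ‖v‖ ^ 2 := hv.trans (by gcongr; nlinarith)
        _ ≤ ((1 - d ^ 2 / 2) * ‖v‖) ^ 2 := by nlinarith [sq_nonneg (d ^ 2 * ‖v‖)]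
    nlinarith

theorem norm_starProjection_mul_starProjection_apply_lt (hMN : M ⊓ N = ⊥) {x : E} (hx : x ≠ 0) :
    ‖(M.starProjection * N.starProjection) x‖ < ‖x‖ := by
  have hM := M.norm_starProjection_apply_le (N.starProjection x)
  have hN := N.norm_starProjection_apply_le x
  refine lt_of_le_of_ne (hM.trans hN) fun (h : ‖M.starProjection (N.starProjection x)‖ = ‖x‖) ↦ ?_
  have hxN : x ∈ N := (N.mem_iff_norm_starProjection x).2 (by linarith)
  rw [starProjection_eq_self_iff.2 hxN] at h
  have hxM : x ∈ M := (M.mem_iff_norm_starProjection x).2 h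
  exact hx (by simpa [hMN] using mem_inf.2 ⟨hxM, hxN⟩)

end Angle

theorem inf_inf_orthogonal_inf_eq_bot : M ⊓ ((M ⊓ N)ᗮ ⊓ N) = ⊥ :=
  le_bot_iff.1 <| (M ⊓ N).inf_orthogonal_eq_bot ▸
    le_inf (le_inf inf_le_left (inf_le_right.trans inf_le_right)) (inf_le_right.trans inf_le_left)

theorem sup_orthogonal_inf_inf_eq_sup [(M ⊓ N).HasOrthogonalProjection] :
    M ⊔ ((M ⊓ N)ᗮ ⊓ N) = M ⊔ N := by
  conv_rhs => rw [← sup_orthogonal_inf_of_hasOrthogonalProjection (inf_le_right : M ⊓ N ≤ N)]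
  rw [← sup_assoc, sup_inf_self]

theorem starProjection_mul_sub_starProjection_inf [M.HasOrthogonalProjection]
    [N.HasOrthogonalProjection] [(M ⊓ N).HasOrthogonalProjection]
    [((M ⊓ N)ᗮ ⊓ N).HasOrthogonalProjection] :
    M.starProjection * N.starProjection - (M ⊓ N).starProjection =
      M.starProjection * ((M ⊓ N)ᗮ ⊓ N).starProjection := by
  rw [← starProjection_sub_starProjection_of_le inf_le_right, mul_sub,
    starProjection_mul_starProjection_eq_right_of_le inf_le_left]

end Submodule

theorem ContinuousLinearMap.exists_seq_norm_le_one_tendsto_norm_apply {𝕜 E F : Type*}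
    [DenselyNormedField 𝕜] [NormedAddCommGroup E] [NormedSpace 𝕜 E] [SeminormedAddCommGroup F]
    [NormedSpace 𝕜 F] (T : E →L[𝕜] F) :
    ∃ x : ℕ → E, (∀ n, ‖x n‖ ≤ 1) ∧ Tendsto (fun n ↦ ‖T (x n)‖) atTop (𝓝 ‖T‖) := by
  have hbdd : BddAbove ((fun x ↦ ‖T x‖) '' Metric.closedBall 0 1) := by
    refine ⟨‖T‖, ?_⟩
    rintro _ ⟨x, hx, rfl⟩
    exact T.unit_le_opNorm x (mem_closedBall_zero_iff.1 hx)
  obtain ⟨u, -, hu, hmem⟩ := exists_seq_tendsto_sSup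
    ((Metric.nonempty_closedBall.2 zero_le_one).image fun x ↦ ‖T x‖) hbdd
  choose x hx hxu using hmem
  refine ⟨x, fun n ↦ mem_closedBall_zero_iff.1 (hx n), ?_⟩
  simpa only [hxu, T.sSup_unitClosedBall_eq_norm] using hu

section WeakConvergence

variable {𝕜 E : Type*} [RCLike 𝕜] [NormedAddCommGroup E] [InnerProductSpace 𝕜 E]

theorem tendsto_inner_zero_of_dense {x : ℕ → E} {C : ℝ} (hx : ∀ n, ‖x n‖ ≤ C) {s : Set E}
    (hs : Dense s) (h : ∀ y ∈ s, Tendsto (fun n ↦ ⟪x n, y⟫_𝕜) atTop (𝓝 0)) (y : E) :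
    Tendsto (fun n ↦ ⟪x n, y⟫_𝕜) atTop (𝓝 0) := by
  have hequi : Equicontinuous fun n ↦ (innerSL 𝕜 (x n) : E → 𝕜) := by
    have := (NormedSpace.equicontinuous_TFAE fun n ↦ innerSL 𝕜 (x n)).out 5 1
    exact this.1 ⟨C, fun n ↦ (innerSL_apply_norm 𝕜 (x n)).trans_le (hx n)⟩
  have hclosed := hequi.isClosed_setOfPred_tendsto (l := atTop) (f := fun _ ↦ 0) continuous_const
  exact (hclosed.closure_subset_iff.2 h) (hs.closure_eq ▸ Set.mem_univ y)

variable [CompleteSpace E]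

theorem IsSelfAdjoint.denseRange_of_injective {S : E →L[𝕜] E} (hS : IsSelfAdjoint S)
    (hinj : Function.Injective S) : DenseRange S := by
  have h : S.rangeᗮ = ⊥ := by
    rw [S.orthogonal_range, hS.adjoint_eq, LinearMap.ker_eq_bot.2 hinj]
  exact Submodule.dense_iff_topologicalClosure_eq_top.2
    (Submodule.topologicalClosure_eq_top_iff.2 h)

theorem IsCompactOperator.tendsto_zero_of_tendsto_inner {K : E →L[𝕜] E}
    (hK : IsCompactOperator K) {x : ℕ → E} {C : ℝ} (hx : ∀ n, ‖x n‖ ≤ C)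
    (hw : ∀ y, Tendsto (fun n ↦ ⟪x n, y⟫_𝕜) atTop (𝓝 0)) :
    Tendsto (fun n ↦ K (x n)) atTop (𝓝 0) := by
  obtain ⟨s, hs, hKs⟩ := hK.image_closedBall_subset_compact C
  refine hs.tendsto_nhds_of_unique_mapClusterPt
    (Eventually.of_forall fun n ↦ hKs ⟨x n, mem_closedBall_zero_iff.2 (hx n), rfl⟩)
    fun z _ hz ↦ ext_inner_right 𝕜 fun y ↦ ?_
  have hcl : MapClusterPt ⟪z, y⟫_𝕜 atTop (fun n ↦ ⟪K (x n), y⟫_𝕜) :=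
    hz.tendsto_comp ((continuous_id.inner continuous_const).tendsto z)
  have hlim : Tendsto (fun n ↦ ⟪K (x n), y⟫_𝕜) atTop (𝓝 0) := by
    simpa only [ContinuousLinearMap.adjoint_inner_right] using
      hw (ContinuousLinearMap.adjoint K y)
  rw [inner_zero_left]
  exact eq_of_nhds_neBot (ClusterPt.mono hcl hlim).neBot

namespace ContinuousLinearMap

theorem re_inner_star_mul_self_apply (T : E →L[𝕜] E) (x : E) :
    RCLike.re ⟪(star T * T) x, x⟫_𝕜 = ‖T x‖ ^ 2 := by
  rw [mul_apply_eq_comp, star_eq_adjoint, adjoint_inner_left]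
  exact inner_self_eq_norm_sq (T x)

theorem norm_sq_star_mul_self_sub_one_apply_le {T : E →L[𝕜] E} (hT : ‖T‖ ≤ 1) {x : E}
    (hx : ‖x‖ ≤ 1) : ‖(star T * T - 1) x‖ ^ 2 ≤ 2 * (1 - ‖T x‖ ^ 2) := by
  have hTTx : ‖(star T * T) x‖ ≤ 1 :=
    ((star T * T).le_opNorm x).trans (by
      rw [CStarRing.norm_star_mul_self (x := T)]; nlinarith [norm_nonneg T, norm_nonneg x])
  rw [sub_apply, one_apply_eq_self, norm_sub_sq (𝕜 := 𝕜), re_inner_star_mul_self_apply]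
  nlinarith [norm_nonneg ((star T * T) x), norm_nonneg x]

theorem injective_star_mul_self_sub_one {T : E →L[𝕜] E} (hT : ∀ x ≠ 0, ‖T x‖ < ‖x‖) :
    Function.Injective (star T * T - 1 : E →L[𝕜] E) := by
  refine (injective_iff_map_eq_zero _).2 fun v hv ↦ by_contra fun hv0 ↦ (hT v hv0).ne ?_
  have hTTv : (star T * T) v = v := by
    rwa [sub_apply, one_apply_eq_self, sub_eq_zero] at hv
  have h := T.re_inner_star_mul_self_apply v
  rw [hTTv, inner_self_eq_norm_sq] at h
  exact (pow_left_inj₀ (norm_nonneg _) (norm_nonneg _) two_ne_zero).1 h.symm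

theorem one_le_norm_add_of_isCompactOperator {T K : E →L[𝕜] E}
    (hT : ∀ x ≠ 0, ‖T x‖ < ‖x‖) (hT1 : 1 ≤ ‖T‖) (hK : IsCompactOperator K) :
    1 ≤ ‖T + K‖ := by
  have hTle : ‖T‖ ≤ 1 := T.opNorm_le_bound zero_le_one fun x ↦ by
    rcases eq_or_ne x 0 with rfl | hx
    · simp
    · simpa using (hT x hx).le
  obtain ⟨x, hx, hTx⟩ := T.exists_seq_norm_le_one_tendsto_norm_apply
  rw [le_antisymm hTle hT1] at hTx
  set S := star T * T - 1
  have hS : IsSelfAdjoint S := (IsSelfAdjoint.star_mul_self T).sub (IsSelfAdjoint.one _)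
  have hSx : Tendsto (fun n ↦ S (x n)) atTop (𝓝 0) := by
    rw [tendsto_zero_iff_norm_tendsto_zero]
    refine squeeze_zero (fun _ ↦ norm_nonneg _) (fun n ↦ Real.le_sqrt_of_sq_le
      (norm_sq_star_mul_self_sub_one_apply_le hTle (hx n))) ?_
    simpa using (((hTx.pow 2).const_sub 1).const_mul 2).sqrt
  have hdense : DenseRange S := hS.denseRange_of_injective (injective_star_mul_self_sub_one hT)
  have hweak : ∀ y, Tendsto (fun n ↦ ⟪x n, y⟫_𝕜) atTop (𝓝 0) := by
    refine tendsto_inner_zero_of_dense hx hdense ?_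
    rintro _ ⟨v, rfl⟩
    have h := hSx.inner (𝕜 := 𝕜) (tendsto_const_nhds (x := v))
    rw [inner_zero_left] at h
    exact h.congr fun n ↦ hS.isSymmetric (x n) v
  have hKx := (hK.tendsto_zero_of_tendsto_inner hx hweak).norm
  rw [norm_zero] at hKx
  refine le_of_tendsto_of_tendsto' hTx (by simpa using tendsto_const_nhds.add hKx) fun n ↦ ?_
  calc ‖T (x n)‖ ≤ ‖(T + K) (x n)‖ + ‖K (x n)‖ := by
        simpa using norm_sub_le ((T + K) (x n)) (K (x n))
    _ ≤ ‖T + K‖ + ‖K (x n)‖ := by gcongr; exact (T + K).unit_le_opNorm _ (hx n)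

end ContinuousLinearMap

end WeakConvergence

theorem proj_eq_starProjection {H : Type*} [NormedAddCommGroup H] [InnerProductSpace ℂ H]
    (K : Submodule ℂ H) [K.HasOrthogonalProjection] : proj K = K.starProjection := by
  rw [proj, dif_pos ‹_›]
  rfl

theorem essFriedrichs_lt_iff {H : Type*} [NormedAddCommGroup H] [InnerProductSpace ℂ H]
    (M N : Submodule ℂ H) {r : ℝ} :
    essFriedrichs M N < r ↔ ∃ K : H →L[ℂ] H,
      IsCompactOperator K ∧ ‖proj M * proj N - proj (M ⊓ N) + K‖ < r := by
  have : Nonempty {T : H →L[ℂ] H // IsCompactOperator T} := ⟨⟨0, isCompactOperator_zero⟩⟩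
  constructor
  · intro h
    obtain ⟨⟨K, hK⟩, hlt⟩ := exists_lt_of_ciInf_lt h
    exact ⟨K, hK, hlt⟩
  · rintro ⟨K, hK, hlt⟩
    have hbdd : BddBelow (Set.range fun K : {T : H →L[ℂ] H // IsCompactOperator T} ↦
        ‖proj M * proj N - proj (M ⊓ N) + (K : H →L[ℂ] H)‖) :=
      ⟨0, by rintro _ ⟨_, rfl⟩; exact norm_nonneg _⟩
    exact (ciInf_le hbdd ⟨K, hK⟩).trans_lt hlt

theorem stmt6 {H : Type*} [NormedAddCommGroup H] [InnerProductSpace ℂ H] [CompleteSpace H]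
    (M N : Submodule ℂ H) (hM : IsClosed (M : Set H)) (hN : IsClosed (N : Set H)) :
    IsClosed ((M ⊔ N : Submodule ℂ H) : Set H) ↔ essFriedrichs M N < 1 := by
  have := hM.completeSpace_coe
  have := hN.completeSpace_coe
  have := (hM.inter hN : IsClosed ((M ⊓ N : Submodule ℂ H) : Set H)).completeSpace_coe
  set N' := (M ⊓ N)ᗮ ⊓ N
  have hN' : IsClosed (N' : Set H) := (Submodule.isClosed_orthogonal _).inter hN
  have := hN'.completeSpace_coe
  have hMN' := M.inf_inf_orthogonal_inf_eq_bot N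
  have hT : proj M * proj N - proj (M ⊓ N) = M.starProjection * N'.starProjection := by
    simp only [proj_eq_starProjection]
    exact M.starProjection_mul_sub_starProjection_inf N
  rw [← M.sup_orthogonal_inf_inf_eq_sup N,
    Submodule.isClosed_sup_iff_exists_mul_norm_le hM hN' hMN',
    ← M.norm_starProjection_mul_starProjection_lt_one_iff N', essFriedrichs_lt_iff, hT]
  refine ⟨fun h ↦ ⟨0, isCompactOperator_zero, by simpa using h⟩, fun ⟨K, hK, hlt⟩ ↦ ?_⟩
  by_contra! h
  exact hlt.not_ge (ContinuousLinearMap.one_le_norm_add_of_isCompactOperator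
    (fun _ hx ↦ M.norm_starProjection_mul_starProjection_apply_lt N' hMN' hx) h hK)
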